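/- arXiv:1807.05402 — 4 statements merged into one kernel-verified Lean document; each statement's English description precedes it below -/
import Mathlib

section
/- Fix g > 1, ω > 1, γ ≥ 1, η ∈ (0,1]. For μ > 1 define V_A(μ) := η·μ + (1−η)·γ, V_{A|β}(μ) := V_A(μ) − g·η·(μ²−1)/(g·μ + (g−1)·ω), and the mutual information I_AB(μ) := (1/2)·log₂( V_A(μ)/V_{A|β}(μ) ). Then I_AB(μ) − (1/2)·log₂( g·η·μ / (g·γ·(1−η) + η·ω·(g−1)) ) tends to 0 as μ → ∞. -/
open Real Filter Topology Asymptotics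

/-!
After clearing the denominator `gμ + (g−1)ω`, the conditional variance becomes
`V_{A|β}(μ) = (Dμ + C)/(gμ + (g−1)ω)` with `D = gγ(1−η) + ηω(g−1) > 0` and a constant `C`.
Each of the three affine factors is asymptotic to its leading term, so
`V_A/V_{A|β} ~ (ημ)(gμ)/(Dμ) = gημ/D`, and the difference of logarithms of asymptotically
equivalent functions tends to `0`.
-/

theorem Asymptotics.IsEquivalent.tendsto_logb_sub {α : Type*} {l : Filter α} {u v : α → ℝ}
    (b : ℝ) (huv : u ~[l] v) (hv : ∀ᶠ x in l, v x ≠ 0) :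
    Tendsto (fun x => logb b (u x) - logb b (v x)) l (𝓝 0) := by
  have hdiv : Tendsto (u / v) l (𝓝 1) := (isEquivalent_iff_tendsto_one hv).mp huv
  have hlog : Tendsto (fun x => logb b ((u / v) x)) l (𝓝 0) := by
    simpa [Function.comp_def] using (continuousAt_logb one_ne_zero).tendsto.comp hdiv
  refine hlog.congr' ?_
  filter_upwards [hv, hdiv.eventually_ne one_ne_zero] with x hvx hquot
  have hux : u x ≠ 0 := fun hux => by simp [hux] at hquot
  exact logb_div hux hvx

theorem isEquivalent_affine_atTop {a : ℝ} (b : ℝ) (ha : a ≠ 0) :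
    (fun x : ℝ => a * x + b) ~[atTop] fun x => a * x :=
  IsEquivalent.refl.add_isLittleO ((isLittleO_const_id_atTop b).const_mul_right ha)

theorem condVar_DR_eq {g ω γ η μ : ℝ} (hP : g * μ + (g - 1) * ω ≠ 0) :
    (η * μ + (1 - η) * γ) - g * η * (μ ^ 2 - 1) / (g * μ + (g - 1) * ω)
      = ((g * γ * (1 - η) + η * ω * (g - 1)) * μ + ((1 - η) * γ * (g - 1) * ω + g * η))
        / (g * μ + (g - 1) * ω) := by
  rw [eq_div_iff hP, sub_mul, div_mul_cancel₀ _ hP]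
  ring

/-- The DR mutual information `I_AB(μ)` approaches
`(1/2)·log₂(gημ/(gγ(1−η)+ηω(g−1)))` as `μ → ∞`. -/
theorem mutual_information_asymptotic_DR (g ω γ η : ℝ)
    (hg : 1 < g) (hω : 1 < ω) (hγ : 1 ≤ γ) (hη : η ∈ Set.Ioc (0 : ℝ) 1) :
    Filter.Tendsto
      (fun μ : ℝ =>
        (1 / 2) * Real.logb 2
            ((η * μ + (1 - η) * γ) /
              ((η * μ + (1 - η) * γ) - g * η * (μ ^ 2 - 1) / (g * μ + (g - 1) * ω)))
          - (1 / 2) * Real.logb 2 (g * η * μ / (g * γ * (1 - η) + η * ω * (g - 1))))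
      Filter.atTop (nhds 0) := by
  obtain ⟨hη0, hη1⟩ := hη
  set D := g * γ * (1 - η) + η * ω * (g - 1)
  set C := (1 - η) * γ * (g - 1) * ω + g * η
  have hD : 0 < D := by
    have : 0 ≤ g * γ * (1 - η) := by apply mul_nonneg <;> nlinarith
    have : 0 < η * ω * (g - 1) := by apply mul_pos <;> nlinarith
    linarith
  have hP := isEquivalent_affine_atTop ((g - 1) * ω) (by positivity)
  have hratio : (fun μ : ℝ => (η * μ + (1 - η) * γ) * (g * μ + (g - 1) * ω) / (D * μ + C))
      ~[atTop] fun μ => g * η * μ / D := by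
    refine (((isEquivalent_affine_atTop _ hη0.ne').mul hP).div
      (isEquivalent_affine_atTop C hD.ne')).congr_right ?_
    filter_upwards [eventually_ne_atTop 0] with μ hμ
    simp only [Pi.mul_apply, Pi.div_apply]
    field_simp
  have htarget : ∀ᶠ μ in atTop, g * η * μ / D ≠ 0 := by
    filter_upwards [eventually_ne_atTop 0] with μ hμ
    positivity
  have hlim := (hratio.tendsto_logb_sub 2 htarget).const_mul (1 / 2)
  rw [mul_zero] at hlim
  refine hlim.congr' ?_
  filter_upwards [eventually_ge_atTop 0] with μ hμ
  rw [condVar_DR_eq (by nlinarith), div_div_eq_mul_div, mul_sub]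
end

section
/- Fix g > 1 and ω > 1. With ν₁(μ), ν₂(μ) the symplectic eigenvalues defined by ν±(μ) = √((Δ(μ) ± √(Δ(μ)² − 4D(μ)))/2) for Δ(μ) = ((g−1)μ+gω)² + ω² − 2g(ω²−1) and D(μ) = (((g−1)μ+gω)·ω − g(ω²−1))², the total entropy S_T(μ) := h(ν₁(μ)) + h(ν₂(μ)) satisfies: S_T(μ) − [ log₂( e·(g−1)·μ/2 ) + h(ω) ] tends to 0 as μ → ∞. -/
/-!
As μ → ∞, `Δ(μ) ~ ((g−1)μ)²` and `D(μ) ~ ((g−1)μω)²`, so the larger symplectic eigenvalue grows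
like `(g−1)μ`, while the smaller one, `ν₂² = D / ν₁²` (Vieta), tends to `ω`. Since
`h(x) = log₂(e x / 2) + o(1)` as `x → ∞` and `h` is continuous at `ω > 1`, the two entropy terms
give `log₂(e(g−1)μ/2) + o(1)` and `h(ω) + o(1)`.
-/

open Real Filter Topology

/-- The bosonic entropy function. -/
noncomputable def h (x : ℝ) : ℝ :=
  ((x + 1) / 2) * Real.logb 2 ((x + 1) / 2) - ((x - 1) / 2) * Real.logb 2 ((x - 1) / 2)

/-- `Δ(μ) = ((g−1)μ+gω)² + ω² − 2g(ω²−1)`. -/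
noncomputable def Delta (g ω μ : ℝ) : ℝ :=
  ((g - 1) * μ + g * ω) ^ 2 + ω ^ 2 - 2 * (g * (ω ^ 2 - 1))

/-- `D(μ) = (((g−1)μ+gω)·ω − g(ω²−1))²`. -/
noncomputable def Dprod (g ω μ : ℝ) : ℝ :=
  (((g - 1) * μ + g * ω) * ω - g * (ω ^ 2 - 1)) ^ 2

/-- The larger symplectic eigenvalue `ν₁(μ)`. -/
noncomputable def nu1 (g ω μ : ℝ) : ℝ :=
  Real.sqrt ((Delta g ω μ + Real.sqrt ((Delta g ω μ) ^ 2 - 4 * Dprod g ω μ)) / 2)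

/-- The smaller symplectic eigenvalue `ν₂(μ)`. -/
noncomputable def nu2 (g ω μ : ℝ) : ℝ :=
  Real.sqrt ((Delta g ω μ - Real.sqrt ((Delta g ω μ) ^ 2 - 4 * Dprod g ω μ)) / 2)

lemma continuousAt_h {x : ℝ} (hx : 1 < x) : ContinuousAt h x := by
  have h₁ : (x + 1) / 2 ≠ 0 := by linarith
  have h₂ : (x - 1) / 2 ≠ 0 := by linarith
  unfold h
  fun_prop (disch := assumption)

lemma tendsto_log_one_add_div_atTop (t : ℝ) :
    Tendsto (fun x : ℝ => log (1 + t / x)) atTop (𝓝 0) := by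
  have h₁ : Tendsto (fun x : ℝ => 1 + t / x) atTop (𝓝 1) := by
    simpa using tendsto_const_nhds.add (tendsto_const_nhds.div_atTop (tendsto_id (α := ℝ)))
  simpa [Function.comp_def] using (continuousAt_log one_ne_zero).tendsto.comp h₁

lemma tendsto_h_sub_logb_atTop :
    Tendsto (fun x => h x - logb 2 (exp 1 * x / 2)) atTop (𝓝 0) := by
  -- Writing `(x ± 1)/2 = (x/2)(1 ± 1/x)`, the `log (x/2)` terms cancel and `x log (1 ± 1/x) → ±1`.
  have key := (((((tendsto_mul_log_one_add_div_atTop 1).sub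
    (tendsto_mul_log_one_add_div_atTop (-1))).add (tendsto_log_one_add_div_atTop 1)).add
    (tendsto_log_one_add_div_atTop (-1))).div_const 2 |>.sub_const 1).div_const (log 2)
  norm_num at key
  refine key.congr' ?_
  filter_upwards [eventually_gt_atTop 1] with x hx
  have hx₀ : 0 < x := by linarith
  have hplus : (x + 1) / 2 = x / 2 * (1 + 1 / x) := by field_simp
  have hminus : (x - 1) / 2 = x / 2 * (1 + -1 / x) := by field_simp; ring
  have hpos : 0 < 1 + -1 / x := by rw [neg_div, ← sub_eq_add_neg, sub_pos, div_lt_one hx₀]; exact hx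
  rw [h, hplus, hminus, mul_div_assoc, logb, logb, logb, log_mul (by positivity) (by positivity),
    log_mul (by positivity) hpos.ne', log_mul (exp_ne_zero 1) (by positivity), log_exp]
  field_simp
  ring

lemma tendsto_h_sub_logb_of_div {f : ℝ → ℝ} {a : ℝ} (ha : 0 < a)
    (hf : Tendsto (fun μ => f μ / μ) atTop (𝓝 a)) :
    Tendsto (fun μ => h (f μ) - logb 2 (exp 1 * a * μ / 2)) atTop (𝓝 0) := by
  have hf_atTop : Tendsto f atTop atTop :=
    (hf.pos_mul_atTop ha tendsto_id).congr' <| by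
      filter_upwards [eventually_gt_atTop 0] with μ hμ using div_mul_cancel₀ _ hμ.ne'
  have hratio : Tendsto (fun μ => logb 2 (f μ / μ / a)) atTop (𝓝 0) := by
    have hf' := hf.div_const a
    rw [div_self ha.ne'] at hf'
    simpa [Function.comp_def] using (continuousAt_logb one_ne_zero).tendsto.comp hf'
  have hsum := (tendsto_h_sub_logb_atTop.comp hf_atTop).add hratio
  rw [add_zero] at hsum
  refine hsum.congr' ?_
  filter_upwards [eventually_gt_atTop 0, hf_atTop.eventually_gt_atTop 0] with μ hμ hfμ
  have : f μ / μ / a = (exp 1 * f μ / 2) / (exp 1 * a * μ / 2) := by field_simp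
  rw [Function.comp_apply, this, logb_div (x := exp 1 * f μ / 2) (by positivity) (by positivity)]
  ring

lemma tendsto_quadratic_div_sq (p q r : ℝ) :
    Tendsto (fun μ : ℝ => (p * μ ^ 2 + q * μ + r) / μ ^ 2) atTop (𝓝 p) := by
  have hlim : Tendsto (fun μ : ℝ => p + q * μ⁻¹ + r * μ⁻¹ ^ 2) atTop (𝓝 p) := by
    simpa using (tendsto_const_nhds.add (tendsto_inv_atTop_zero.const_mul q)).add
      ((tendsto_inv_atTop_zero.pow 2).const_mul r)
  refine hlim.congr' ?_
  filter_upwards [eventually_ne_atTop 0] with μ hμ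
  field_simp

section QuadraticCoefficients

variable {Δ D : ℝ → ℝ} {c d : ℝ}

lemma tendsto_sqrt_discrim_div_sq (hΔ : Tendsto (fun μ => Δ μ / μ ^ 2) atTop (𝓝 c))
    (hD : Tendsto (fun μ => D μ / μ ^ 2) atTop (𝓝 d)) (hc : 0 ≤ c) :
    Tendsto (fun μ => √(Δ μ ^ 2 - 4 * D μ) / μ ^ 2) atTop (𝓝 c) := by
  have hdisc : Tendsto (fun μ => (Δ μ / μ ^ 2) ^ 2 - 4 * (D μ / μ ^ 2) * μ⁻¹ ^ 2) atTop
      (𝓝 (c ^ 2)) := by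
    simpa using (hΔ.pow 2).sub ((hD.const_mul 4).mul (tendsto_inv_atTop_zero.pow 2))
  have hsqrt := (continuous_sqrt.tendsto _).comp hdisc
  rw [sqrt_sq hc] at hsqrt
  refine hsqrt.congr' ?_
  filter_upwards [eventually_ne_atTop 0] with μ hμ
  rw [Function.comp_apply, show (Δ μ / μ ^ 2) ^ 2 - 4 * (D μ / μ ^ 2) * μ⁻¹ ^ 2
      = (Δ μ ^ 2 - 4 * D μ) / (μ ^ 2) ^ 2 by field_simp, sqrt_div' _ (by positivity),
    sqrt_sq (by positivity)]

lemma tendsto_sqrt_larger_root_div (hΔ : Tendsto (fun μ => Δ μ / μ ^ 2) atTop (𝓝 c))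
    (hD : Tendsto (fun μ => D μ / μ ^ 2) atTop (𝓝 d)) (hc : 0 ≤ c) :
    Tendsto (fun μ => √((Δ μ + √(Δ μ ^ 2 - 4 * D μ)) / 2) / μ) atTop (𝓝 √c) := by
  have hsqrt := (continuous_sqrt.tendsto _).comp
    ((hΔ.add (tendsto_sqrt_discrim_div_sq hΔ hD hc)).div_const 2)
  rw [add_self_div_two] at hsqrt
  refine hsqrt.congr' ?_
  filter_upwards [eventually_gt_atTop 0] with μ hμ
  rw [Function.comp_apply, ← add_div, div_right_comm, sqrt_div' _ (by positivity),
    sqrt_sq hμ.le]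

lemma tendsto_sqrt_smaller_root (hΔ : Tendsto (fun μ => Δ μ / μ ^ 2) atTop (𝓝 c))
    (hD : Tendsto (fun μ => D μ / μ ^ 2) atTop (𝓝 d)) (hc : 0 < c) :
    Tendsto (fun μ => √((Δ μ - √(Δ μ ^ 2 - 4 * D μ)) / 2)) atTop (𝓝 √(d / c)) := by
  have hs := tendsto_sqrt_discrim_div_sq hΔ hD hc.le
  have hsum : Tendsto (fun μ => (Δ μ + √(Δ μ ^ 2 - 4 * D μ)) / μ ^ 2) atTop (𝓝 (c + c)) := by
    simpa only [add_div] using hΔ.add hs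
  have hsqrt := (continuous_sqrt.tendsto _).comp ((hD.const_mul 2).div hsum (by positivity))
  rw [show 2 * d / (c + c) = d / c by field_simp; ring] at hsqrt
  refine hsqrt.congr' ?_
  filter_upwards [eventually_ne_atTop 0, hs.eventually_const_lt hc,
    hsum.eventually_const_lt (by positivity)] with μ hμ hs_pos hsum_pos
  have hE : 0 ≤ Δ μ ^ 2 - 4 * D μ := by
    by_contra! hneg
    rw [sqrt_eq_zero_of_nonpos hneg.le, zero_div] at hs_pos
    exact hs_pos.false
  have hroot : Δ μ + √(Δ μ ^ 2 - 4 * D μ) ≠ 0 := by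
    rintro hzero
    rw [hzero, zero_div] at hsum_pos
    exact hsum_pos.false
  have hrationalize :
      2 * D μ / (Δ μ + √(Δ μ ^ 2 - 4 * D μ)) = (Δ μ - √(Δ μ ^ 2 - 4 * D μ)) / 2 := by
    rw [div_eq_div_iff hroot two_ne_zero]
    linear_combination sq_sqrt hE
  rw [Function.comp_apply, Pi.div_apply, mul_div_assoc', div_div_div_cancel_right₀ (by positivity),
    hrationalize]

end QuadraticCoefficients

lemma tendsto_Delta_div_sq (g ω : ℝ) :
    Tendsto (fun μ => Delta g ω μ / μ ^ 2) atTop (𝓝 ((g - 1) ^ 2)) :=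
  (tendsto_quadratic_div_sq _ (2 * (g - 1) * (g * ω))
    ((g * ω) ^ 2 + ω ^ 2 - 2 * (g * (ω ^ 2 - 1)))).congr fun μ => by rw [Delta]; ring

lemma tendsto_Dprod_div_sq (g ω : ℝ) :
    Tendsto (fun μ => Dprod g ω μ / μ ^ 2) atTop (𝓝 ((g - 1) ^ 2 * ω ^ 2)) :=
  (tendsto_quadratic_div_sq _ (2 * (g - 1) * ω * g) (g ^ 2)).congr fun μ => by rw [Dprod]; ring

/-- Asymptotics of Eve's total entropy:
`S_T(μ) − [log₂(e(g−1)μ/2) + h(ω)] → 0` as `μ → ∞`. -/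
theorem total_entropy_asymptotic (g ω : ℝ) (hg : 1 < g) (hω : 1 < ω) :
    Filter.Tendsto
      (fun μ : ℝ =>
        (h (nu1 g ω μ) + h (nu2 g ω μ))
          - (Real.logb 2 (Real.exp 1 * (g - 1) * μ / 2) + h ω))
      Filter.atTop (nhds 0) := by
  have hg₁ : 0 < g - 1 := sub_pos.mpr hg
  have hc : 0 < (g - 1) ^ 2 := by positivity
  have hν₁ : Tendsto (fun μ => nu1 g ω μ / μ) atTop (𝓝 (g - 1)) := by
    have := tendsto_sqrt_larger_root_div (tendsto_Delta_div_sq g ω) (tendsto_Dprod_div_sq g ω) hc.le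
    rwa [sqrt_sq hg₁.le] at this
  have hν₂ : Tendsto (nu2 g ω) atTop (𝓝 ω) := by
    have := tendsto_sqrt_smaller_root (tendsto_Delta_div_sq g ω) (tendsto_Dprod_div_sq g ω) hc
    rwa [mul_div_cancel_left₀ _ hc.ne', sqrt_sq (by linarith)] at this
  have hlarge := tendsto_h_sub_logb_of_div hg₁ hν₁
  have hsmall := ((continuousAt_h hω).tendsto.comp hν₂).sub_const (h ω)
  rw [sub_self] at hsmall
  simpa using (hlarge.add hsmall).congr fun μ => by simp only [Function.comp_apply]; ring
end

section
/- Fix g > 1, ω > 1, γ ≥ 1, η ∈ (0,1). For μ > 1 let M(μ) be the 4×4 matrix M(μ) := V_{E′e}(μ) − (1/(η·μ+(1−η)·γ))·u(μ)·u(μ)ᵀ, where V_{E′e}(μ) = [[((g−1)μ+gω)·I, √(g(ω²−1))·Z],[√(g(ω²−1))·Z, ω·I]] and u(μ) is the column vector (√((g−1)·η·(μ²−1)), 0, 0, 0)ᵀ (conditioning on Alice's q-homodyne). Let Δ̄(μ) and D̄(μ) be defined by the identity charpoly(Ω₂·M(μ)) = X⁴ + Δ̄(μ)·X² + D̄(μ),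 and set ν̄₁(μ) := √((Δ̄(μ)+√(Δ̄(μ)²−4D̄(μ)))/2), ν̄₂(μ) := √((Δ̄(μ)−√(Δ̄(μ)²−4D̄(μ)))/2). Then ν̄₁(μ)/√μ → √( (g−1)·[g·η·ω + γ·(g−1)·(1−η)]/η ) and ν̄₂(μ) → √( ω·[g·η + γ·ω·(g−1)·(1−η)] / (g·η·ω + γ·(g−1)·(1−η)) ) as μ → ∞. -/
/-!
Conditioning on Alice's `q`-homodyne only lowers the `q`-variance of Eve's mode `E′`, so the
conditional matrix keeps the two-mode shape `[[diag(p, q), c Z], [c Z, ω I]]` and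
`charpoly(Ω₂ M) = X⁴ + (p q + ω² − 2c²) X² + (ω p − c²)(ω q − c²)`. Here `q` grows linearly in `μ`
while the conditioned variance `p` tends to a finite limit, so both `Δ̄` and `D̄` grow linearly
in `μ`. For the roots `λ± = (Δ̄ ± √(Δ̄² − 4D̄))/2` of `Y² − Δ̄ Y + D̄` this forces `λ₊ ~ Aμ`
(with `Δ̄ ~ Aμ`), and then `λ₋ = D̄ / λ₊` converges to `lim (D̄/μ) / A`.
-/

open Real Filter Matrix Polynomial

/-- The standard two-mode symplectic form `Ω₂`. -/
noncomputable def Omega2 : Matrix (Fin 4) (Fin 4) ℝ :=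
  !![0, 1, 0, 0; -1, 0, 0, 0; 0, 0, 0, 1; 0, 0, -1, 0]

/-- Eve's total covariance matrix
`V_{E′e}(μ) = [[((g−1)μ+gω)I, √(g(ω²−1))Z],[√(g(ω²−1))Z, ωI]]`. -/
noncomputable def VEe (g ω μ : ℝ) : Matrix (Fin 4) (Fin 4) ℝ :=
  !![(g - 1) * μ + g * ω, 0, Real.sqrt (g * (ω ^ 2 - 1)), 0;
     0, (g - 1) * μ + g * ω, 0, -Real.sqrt (g * (ω ^ 2 - 1));
     Real.sqrt (g * (ω ^ 2 - 1)), 0, ω, 0;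
     0, -Real.sqrt (g * (ω ^ 2 - 1)), 0, ω]

/-- The DR conditioning vector `u(μ) = (√((g−1)η(μ²−1)), 0, 0, 0)ᵀ`. -/
noncomputable def uDR (g η μ : ℝ) : Fin 4 → ℝ :=
  ![Real.sqrt ((g - 1) * η * (μ ^ 2 - 1)), 0, 0, 0]

/-- Eve's conditional covariance matrix after Alice's `q`-homodyne:
`M(μ) = V_{E′e}(μ) − (1/(ημ+(1−η)γ))·u(μ)u(μ)ᵀ`. -/
noncomputable def Mdr (g ω γ η μ : ℝ) : Matrix (Fin 4) (Fin 4) ℝ :=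
  VEe g ω μ - (η * μ + (1 - η) * γ)⁻¹ • Matrix.vecMulVec (uDR g η μ) (uDR g η μ)

open Topology

noncomputable section

def largeRoot (b c : ℝ) : ℝ := (b + √(b ^ 2 - 4 * c)) / 2

def smallRoot (b c : ℝ) : ℝ := (b - √(b ^ 2 - 4 * c)) / 2

theorem largeRoot_mul_smallRoot {b c : ℝ} (h : 0 ≤ b ^ 2 - 4 * c) :
    largeRoot b c * smallRoot b c = c := by
  unfold largeRoot smallRoot
  linear_combination (-1 / 4 : ℝ) * Real.sq_sqrt h

section RootAsymptotics

variable {α : Type*} {l : Filter α} {b c r : α → ℝ} {A B : ℝ}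

theorem tendsto_discrim_div_sq (hr : Tendsto r l atTop)
    (hb : Tendsto (fun x => b x / r x) l (𝓝 A)) (hc : Tendsto (fun x => c x / r x) l (𝓝 B)) :
    Tendsto (fun x => (b x ^ 2 - 4 * c x) / r x ^ 2) l (𝓝 (A ^ 2)) := by
  have h := (hb.pow 2).sub ((hc.const_mul 4).mul hr.inv_tendsto_atTop)
  rw [mul_zero, sub_zero] at h
  refine h.congr' ?_
  filter_upwards [hr.eventually_ne_atTop 0] with x hx
  simp only [Pi.inv_apply]
  field_simp

theorem tendsto_largeRoot_div (hA : 0 ≤ A) (hr : Tendsto r l atTop)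
    (hb : Tendsto (fun x => b x / r x) l (𝓝 A)) (hc : Tendsto (fun x => c x / r x) l (𝓝 B)) :
    Tendsto (fun x => largeRoot (b x) (c x) / r x) l (𝓝 A) := by
  have h := (hb.add (tendsto_discrim_div_sq hr hb hc).sqrt).div_const 2
  rw [Real.sqrt_sq hA, add_self_div_two] at h
  refine h.congr' ?_
  filter_upwards [hr.eventually_gt_atTop 0] with x hx
  rw [largeRoot, Real.sqrt_div' _ (by positivity), Real.sqrt_sq hx.le]
  ring

theorem tendsto_sqrt_largeRoot_div_sqrt (hA : 0 ≤ A) (hr : Tendsto r l atTop)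
    (hb : Tendsto (fun x => b x / r x) l (𝓝 A)) (hc : Tendsto (fun x => c x / r x) l (𝓝 B)) :
    Tendsto (fun x => √(largeRoot (b x) (c x)) / √(r x)) l (𝓝 √A) := by
  refine (tendsto_largeRoot_div hA hr hb hc).sqrt.congr' ?_
  filter_upwards [hr.eventually_ge_atTop 0] with x hx
  exact Real.sqrt_div' _ hx

theorem tendsto_smallRoot (hA : 0 < A) (hr : Tendsto r l atTop)
    (hb : Tendsto (fun x => b x / r x) l (𝓝 A)) (hc : Tendsto (fun x => c x / r x) l (𝓝 B)) :
    Tendsto (fun x => smallRoot (b x) (c x)) l (𝓝 (B / A)) := by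
  have hL := tendsto_largeRoot_div hA.le hr hb hc
  refine (hc.div hL hA.ne').congr' ?_
  filter_upwards [hr.eventually_gt_atTop 0, hL.eventually (eventually_gt_nhds hA),
    (tendsto_discrim_div_sq hr hb hc).eventually (eventually_gt_nhds (pow_pos hA 2))]
    with x hx hLx hdisc
  have hdisc' : 0 ≤ b x ^ 2 - 4 * c x := (div_pos_iff_of_pos_right (pow_pos hx 2)).mp hdisc |>.le
  have hLne : largeRoot (b x) (c x) ≠ 0 := ((div_pos_iff_of_pos_right hx).mp hLx).ne'
  rw [Pi.div_apply, div_div_div_cancel_right₀ hx.ne', div_eq_iff hLne, mul_comm]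
  exact (largeRoot_mul_smallRoot hdisc').symm

end RootAsymptotics

theorem tendsto_affine_div_affine_atTop (p q : ℝ) {s : ℝ} (t : ℝ) (hs : s ≠ 0) :
    Tendsto (fun x => (p * x + q) / (s * x + t)) atTop (𝓝 (p / s)) := by
  have h := ((tendsto_inv_atTop_zero.const_mul q).const_add p).div
    ((tendsto_inv_atTop_zero.const_mul t).const_add s) (by simpa using hs)
  rw [mul_zero, add_zero, mul_zero, add_zero] at h
  refine h.congr' ?_
  filter_upwards [eventually_ne_atTop 0] with x hx
  simp only [Pi.div_apply]
  field_simp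

def twoModeCM (p q c w : ℝ) : Matrix (Fin 4) (Fin 4) ℝ :=
  !![p, 0, c, 0; 0, q, 0, -c; c, 0, w, 0; 0, -c, 0, w]

theorem charpoly_omega2_mul_twoModeCM (p q c w : ℝ) :
    (Omega2 * twoModeCM p q c w).charpoly =
      X ^ 4 + C (p * q + w ^ 2 - 2 * c ^ 2) * X ^ 2 + C ((w * p - c ^ 2) * (w * q - c ^ 2)) := by
  simp [Matrix.charpoly, Matrix.det_succ_row_zero, Fin.sum_univ_succ, Omega2, twoModeCM,
    charmatrix_apply, Fin.succAbove, map_ofNat]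
  ring

theorem Polynomial.eq_and_eq_of_X_pow_four_add_C_mul_X_sq_add_C_eq {R : Type*} [Semiring R]
    {a b a' b' : R} (h : (X ^ 4 + C a * X ^ 2 + C b : R[X]) = X ^ 4 + C a' * X ^ 2 + C b') :
    a = a' ∧ b = b' :=
  ⟨by simpa [coeff_X_pow] using congrArg (coeff · 2) h,
    by simpa [coeff_X_pow] using congrArg (coeff · 0) h⟩

section Biquadratic

variable {α : Type*} {l : Filter α} {p q r : α → ℝ} {P Q : ℝ}

theorem tendsto_biquadratic_coeffs_div (c w : ℝ) (hr : Tendsto r l atTop)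
    (hp : Tendsto p l (𝓝 P)) (hq : Tendsto (fun x => q x / r x) l (𝓝 Q)) :
    Tendsto (fun x => (p x * q x + w ^ 2 - 2 * c ^ 2) / r x) l (𝓝 (P * Q)) ∧
      Tendsto (fun x => (w * p x - c ^ 2) * (w * q x - c ^ 2) / r x) l
        (𝓝 ((w * P - c ^ 2) * (w * Q))) := by
  have hconst : Tendsto (fun x => c ^ 2 / r x) l (𝓝 0) := tendsto_const_nhds.div_atTop hr
  have hΔ := (hp.mul hq).add ((tendsto_const_nhds (x := w ^ 2 - 2 * c ^ 2)).div_atTop hr)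
  have hD := ((hp.const_mul w).sub_const (c ^ 2)).mul ((hq.const_mul w).sub hconst)
  rw [add_zero] at hΔ
  rw [sub_zero] at hD
  exact ⟨hΔ.congr fun x => by ring, hD.congr fun x => by ring⟩

end Biquadratic

/-- The `q`-variance of Eve's mode `E′` after conditioning on Alice's `q`-homodyne. -/
def condQVar (g ω γ η μ : ℝ) : ℝ :=
  (g - 1) * μ + g * ω - (g - 1) * η * (μ ^ 2 - 1) / (η * μ + (1 - η) * γ)

theorem Mdr_eq_twoModeCM {g ω γ η μ : ℝ} (hg : 1 ≤ g) (hη : 0 ≤ η) (hμ : 1 ≤ μ) :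
    Mdr g ω γ η μ =
      twoModeCM (condQVar g ω γ η μ) ((g - 1) * μ + g * ω) √(g * (ω ^ 2 - 1)) ω := by
  have hu : √((g - 1) * η * (μ ^ 2 - 1)) * √((g - 1) * η * (μ ^ 2 - 1)) =
      (g - 1) * η * (μ ^ 2 - 1) :=
    Real.mul_self_sqrt (mul_nonneg (mul_nonneg (by linarith) hη) (by nlinarith))
  ext i j
  fin_cases i <;> fin_cases j <;>
    simp [Mdr, VEe, uDR, twoModeCM, condQVar, hu, div_eq_inv_mul]

theorem tendsto_condQVar {g ω γ η : ℝ} (hη : 0 < η) :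
    Tendsto (condQVar g ω γ η) atTop (𝓝 ((g * η * ω + γ * (g - 1) * (1 - η)) / η)) := by
  refine (tendsto_affine_div_affine_atTop (g * η * ω + γ * (g - 1) * (1 - η))
    (g * ω * (1 - η) * γ + (g - 1) * η) ((1 - η) * γ) hη.ne').congr' ?_
  have hden := tendsto_atTop_add_const_right atTop ((1 - η) * γ) (tendsto_id.const_mul_atTop hη)
  filter_upwards [hden.eventually_ne_atTop 0] with μ hμ
  simp only [id] at hμ
  rw [condQVar, eq_sub_iff_add_eq, ← add_div, div_eq_iff hμ]
  ring

theorem tendsto_coeffs_div_of_charpoly_omega2_mul_Mdr {g ω γ η : ℝ} (hg : 1 ≤ g) (hη : 0 < η)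
    {Δb Db : ℝ → ℝ} (hchar : ∀ μ : ℝ, 1 < μ →
      (Omega2 * Mdr g ω γ η μ).charpoly = X ^ 4 + C (Δb μ) * X ^ 2 + C (Db μ)) :
    Tendsto (fun μ => Δb μ / μ) atTop
        (𝓝 ((g * η * ω + γ * (g - 1) * (1 - η)) / η * (g - 1))) ∧
      Tendsto (fun μ => Db μ / μ) atTop
        (𝓝 ((ω * ((g * η * ω + γ * (g - 1) * (1 - η)) / η) - √(g * (ω ^ 2 - 1)) ^ 2) *
          (ω * (g - 1)))) := by
  have hcoeff (μ : ℝ) (hμ : 1 < μ) := eq_and_eq_of_X_pow_four_add_C_mul_X_sq_add_C_eq <|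
    (hchar μ hμ).symm.trans <| by
      rw [Mdr_eq_twoModeCM hg hη.le hμ.le, charpoly_omega2_mul_twoModeCM]
  have hq : Tendsto (fun μ => ((g - 1) * μ + g * ω) / μ) atTop (𝓝 (g - 1)) := by
    simpa using tendsto_affine_div_affine_atTop (g - 1) (g * ω) 0 one_ne_zero
  obtain ⟨hΔ, hD⟩ := tendsto_biquadratic_coeffs_div √(g * (ω ^ 2 - 1)) ω tendsto_id
    (tendsto_condQVar hη) hq
  refine ⟨hΔ.congr' ?_, hD.congr' ?_⟩ <;>
    filter_upwards [eventually_gt_atTop 1] with μ hμ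
  exacts [by rw [id, (hcoeff μ hμ).1], by rw [id, (hcoeff μ hμ).2]]

end

/-- Asymptotics of the conditional symplectic eigenvalues in DR:
`ν̄₁(μ)/√μ → √((g−1)[gηω+γ(g−1)(1−η)]/η)` and
`ν̄₂(μ) → √(ω[gη+γω(g−1)(1−η)]/(gηω+γ(g−1)(1−η)))`, where `ν̄₁, ν̄₂` are defined through
`charpoly(Ω₂M(μ)) = X⁴ + Δ̄(μ)X² + D̄(μ)`. -/
theorem conditional_spectrum_asymptotics_DR (g ω γ η : ℝ)
    (hg : 1 < g) (hω : 1 < ω) (hγ : 1 ≤ γ) (hη : η ∈ Set.Ioo (0 : ℝ) 1)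
    (Δb Db : ℝ → ℝ)
    (hchar : ∀ μ : ℝ, 1 < μ →
      Matrix.charpoly (Omega2 * Mdr g ω γ η μ) =
        X ^ 4 + C (Δb μ) * X ^ 2 + C (Db μ)) :
    Filter.Tendsto
      (fun μ : ℝ =>
        Real.sqrt ((Δb μ + Real.sqrt ((Δb μ) ^ 2 - 4 * Db μ)) / 2) / Real.sqrt μ)
      Filter.atTop
      (nhds (Real.sqrt ((g - 1) * (g * η * ω + γ * (g - 1) * (1 - η)) / η))) ∧
    Filter.Tendsto
      (fun μ : ℝ =>
        Real.sqrt ((Δb μ - Real.sqrt ((Δb μ) ^ 2 - 4 * Db μ)) / 2))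
      Filter.atTop
      (nhds (Real.sqrt (ω * (g * η + γ * ω * (g - 1) * (1 - η)) /
        (g * η * ω + γ * (g - 1) * (1 - η))))) := by
  obtain ⟨hη0, hη1⟩ := hη
  obtain ⟨hΔ, hD⟩ := tendsto_coeffs_div_of_charpoly_omega2_mul_Mdr hg.le hη0 hchar
  set K := g * η * ω + γ * (g - 1) * (1 - η) with hK_def
  have hK : 0 < K := by positivity
  have hA : 0 < K / η * (g - 1) := by positivity
  have hB : (ω * (K / η) - √(g * (ω ^ 2 - 1)) ^ 2) * (ω * (g - 1)) / (K / η * (g - 1)) =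
      ω * (g * η + γ * ω * (g - 1) * (1 - η)) / K := by
    have hg₁ : g - 1 ≠ 0 := by linarith
    rw [Real.sq_sqrt (mul_pos (by linarith) (by nlinarith)).le, hK_def]
    field_simp
    ring
  constructor
  · rw [show (g - 1) * K / η = K / η * (g - 1) by ring]
    exact tendsto_sqrt_largeRoot_div_sqrt hA.le tendsto_id hΔ hD
  · rw [← hB]
    exact (tendsto_smallRoot hA tendsto_id hΔ hD).sqrt
end

section
/- Fix μ > 1, γ ≥ 1, ω > 1, η ∈ [0,1], g > 1. Let V₀ be the 10×10 block-diagonal covariance matrix on modes (A, B₀, v, E, e) with TMSV(μ) on (A,B₀), γI on v, TMSV(ω) on (E,e), and all other off-diagonal blocks zero. Let S_g act as T_AMP(g) = [[√g·I, √(g−1)·Z],[√(g−1)·Z, √g·I]] on (B₀,E) and the identity elsewhere, and then let S_η act as T_BS(η) = [[√η·I, √(1−η)·I],[−√(1−η)·I, √η·I]] on (B,v), where B is the first amplifier output. Then in V := S_η·S_g·V₀·S_gᵀ·S_ηᵀ, writing B for the first beam-splitter output and E′ for the second amplifier output: V_{AA} = μ·I, V_{BB} = [η·(gμ+(g−1)ω)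 + (1−η)·γ]·I, V_{AB} = √(g·η·(μ²−1))·Z, V_{E′E′} = [(g−1)μ+gω]·I, V_{ee} = ω·I, V_{E′e} = √(g(ω²−1))·Z, V_{E′B} = √(g·(g−1)·η)·(μ+ω)·Z, and V_{eB} = √((g−1)·η·(ω²−1))·I. -/
open Matrix

/-- `I = diag(1,1)`. -/
noncomputable def I2 : Matrix (Fin 2) (Fin 2) ℝ := 1

/-- `Z = diag(1,−1)`. -/
noncomputable def Z2 : Matrix (Fin 2) (Fin 2) ℝ := !![1, 0; 0, -1]

/-- Build a 10×10 (five-mode) matrix from its 2×2 blocks. -/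
def blockMat (f : Fin 5 → Fin 5 → Matrix (Fin 2) (Fin 2) ℝ) :
    Matrix (Fin 5 × Fin 2) (Fin 5 × Fin 2) ℝ :=
  Matrix.of fun p q => f p.1 q.1 p.2 q.2

/-- Extract the 2×2 block of modes `(i, j)` from a five-mode matrix. -/
def blk (M : Matrix (Fin 5 × Fin 2) (Fin 5 × Fin 2) ℝ) (i j : Fin 5) :
    Matrix (Fin 2) (Fin 2) ℝ :=
  Matrix.of fun a b => M (i, a) (j, b)

/-- Initial covariance matrix on modes `(A, B₀, v, E, e) = (0,1,2,3,4)`: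
TMSV(μ) on `(A,B₀)`, a thermal state `γI` on `v`, TMSV(ω) on `(E,e)`. -/
noncomputable def V0rr (μ γ ω : ℝ) : Matrix (Fin 5 × Fin 2) (Fin 5 × Fin 2) ℝ :=
  blockMat fun i j =>
    if i = 0 ∧ j = 0 then μ • I2
    else if i = 1 ∧ j = 1 then μ • I2
    else if (i = 0 ∧ j = 1) ∨ (i = 1 ∧ j = 0) then Real.sqrt (μ ^ 2 - 1) • Z2
    else if i = 2 ∧ j = 2 then γ • I2
    else if i = 3 ∧ j = 3 then ω • I2
    else if i = 4 ∧ j = 4 then ω • I2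
    else if (i = 3 ∧ j = 4) ∨ (i = 4 ∧ j = 3) then Real.sqrt (ω ^ 2 - 1) • Z2
    else 0

/-- The symplectic matrix acting as the two-mode squeezer `T_AMP(g)` on modes
`(B₀, E) = (1,3)` and as the identity elsewhere. -/
noncomputable def SgRR (g : ℝ) : Matrix (Fin 5 × Fin 2) (Fin 5 × Fin 2) ℝ :=
  blockMat fun i j =>
    if i = 1 ∧ j = 1 then Real.sqrt g • I2
    else if i = 1 ∧ j = 3 then Real.sqrt (g - 1) • Z2
    else if i = 3 ∧ j = 1 then Real.sqrt (g - 1) • Z2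
    else if i = 3 ∧ j = 3 then Real.sqrt g • I2
    else if i = j then I2
    else 0

/-- The symplectic matrix acting as the beam splitter `T_BS(η)` on modes
`(B, v) = (1,2)` (Bob's channel output and trusted thermal mode) and the identity
elsewhere. -/
noncomputable def SetaRR (η : ℝ) : Matrix (Fin 5 × Fin 2) (Fin 5 × Fin 2) ℝ :=
  blockMat fun i j =>
    if i = 1 ∧ j = 1 then Real.sqrt η • I2
    else if i = 1 ∧ j = 2 then Real.sqrt (1 - η) • I2
    else if i = 2 ∧ j = 1 then (-Real.sqrt (1 - η)) • I2
    else if i = 2 ∧ j = 2 then Real.sqrt η • I2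
    else if i = j then I2
    else 0

/-- Output covariance matrix `V = S_η · S_g · V₀ · S_gᵀ · S_ηᵀ` of the RR protocol. -/
noncomputable def Vrr (μ γ ω η g : ℝ) : Matrix (Fin 5 × Fin 2) (Fin 5 × Fin 2) ℝ :=
  SetaRR η * (SgRR g * V0rr μ γ ω * (SgRR g)ᵀ) * (SetaRR η)ᵀ

lemma blockMat_mul (f g : Fin 5 → Fin 5 → Matrix (Fin 2) (Fin 2) ℝ) :
    blockMat f * blockMat g = blockMat (fun i j => ∑ k, f i k * g k j) := by
  ext ⟨i, a⟩ ⟨j, b⟩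
  simp [blockMat, Matrix.mul_apply, Fintype.sum_prod_type, Matrix.sum_apply, Fin.sum_univ_two]

lemma blockMat_transpose (f : Fin 5 → Fin 5 → Matrix (Fin 2) (Fin 2) ℝ) :
    (blockMat f)ᵀ = blockMat (fun i j => (f j i)ᵀ) := by
  ext ⟨i, a⟩ ⟨j, b⟩
  simp [blockMat, Matrix.transpose_apply]

lemma blk_blockMat (f : Fin 5 → Fin 5 → Matrix (Fin 2) (Fin 2) ℝ) (i j : Fin 5) :
    blk (blockMat f) i j = f i j := rfl

lemma Z2_mul_Z2 : Z2 * Z2 = I2 := by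
  ext a b; fin_cases a <;> fin_cases b <;> simp [Z2, I2, Matrix.mul_apply, Fin.sum_univ_two]

lemma Z2_transpose : Z2ᵀ = Z2 := by
  ext a b; fin_cases a <;> fin_cases b <;> simp [Z2]

lemma I2_transpose : I2ᵀ = I2 := by simp [I2]

lemma I2_mul (M : Matrix (Fin 2) (Fin 2) ℝ) : I2 * M = M := one_mul M
lemma mul_I2 (M : Matrix (Fin 2) (Fin 2) ℝ) : M * I2 = M := mul_one M


set_option maxHeartbeats 1000000 in
/-- Blocks of the propagated RR covariance matrix: `A` is mode 0, Bob's detected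
mode `B` (first beam-splitter output) is mode 1, the second amplifier output `E′`
is mode 3, and Eve's idler `e` is mode 4. -/
theorem RR_covariance_blocks (μ γ ω η g : ℝ)
    (hμ : 1 < μ) (hγ : 1 ≤ γ) (hω : 1 < ω) (hη : η ∈ Set.Icc (0 : ℝ) 1) (hg : 1 < g) :
    blk (Vrr μ γ ω η g) 0 0 = μ • I2 ∧
    blk (Vrr μ γ ω η g) 1 1 = (η * (g * μ + (g - 1) * ω) + (1 - η) * γ) • I2 ∧
    blk (Vrr μ γ ω η g) 0 1 = Real.sqrt (g * η * (μ ^ 2 - 1)) • Z2 ∧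
    blk (Vrr μ γ ω η g) 3 3 = ((g - 1) * μ + g * ω) • I2 ∧
    blk (Vrr μ γ ω η g) 4 4 = ω • I2 ∧
    blk (Vrr μ γ ω η g) 3 4 = Real.sqrt (g * (ω ^ 2 - 1)) • Z2 ∧
    blk (Vrr μ γ ω η g) 3 1 = (Real.sqrt (g * (g - 1) * η) * (μ + ω)) • Z2 ∧
    blk (Vrr μ γ ω η g) 4 1 = Real.sqrt ((g - 1) * η * (ω ^ 2 - 1)) • I2 := by
  obtain ⟨hη0, hη1⟩ := hη
  have hg0 : (0:ℝ) ≤ g := by linarith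
  have hg1 : (0:ℝ) ≤ g - 1 := by linarith
  have h1η : (0:ℝ) ≤ 1 - η := by linarith
  have hμ1 : (0:ℝ) ≤ μ ^ 2 - 1 := by nlinarith
  have hω1 : (0:ℝ) ≤ ω ^ 2 - 1 := by nlinarith
  have r1 : Real.sqrt (g * η * (μ ^ 2 - 1)) = Real.sqrt g * Real.sqrt η * Real.sqrt (μ ^ 2 - 1) := by
    rw [Real.sqrt_mul (mul_nonneg hg0 hη0), Real.sqrt_mul hg0]
  have r2 : Real.sqrt (g * (ω ^ 2 - 1)) = Real.sqrt g * Real.sqrt (ω ^ 2 - 1) :=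
    Real.sqrt_mul hg0 _
  have r3 : Real.sqrt (g * (g - 1) * η) = Real.sqrt g * Real.sqrt (g - 1) * Real.sqrt η := by
    rw [Real.sqrt_mul (mul_nonneg hg0 hg1), Real.sqrt_mul hg0]
  have r4 : Real.sqrt ((g - 1) * η * (ω ^ 2 - 1)) =
      Real.sqrt (g - 1) * Real.sqrt η * Real.sqrt (ω ^ 2 - 1) := by
    rw [Real.sqrt_mul (mul_nonneg hg1 hη0), Real.sqrt_mul hg1]
  rw [r1, r2, r3, r4]
  refine ⟨?_, ?_, ?_, ?_, ?_, ?_, ?_, ?_⟩ <;>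
  · simp only [Vrr, SetaRR, SgRR, V0rr, blockMat_transpose, blockMat_mul, blk_blockMat]
    simp [Fin.sum_univ_five, smul_mul_assoc, mul_smul_comm, smul_smul, Z2_mul_Z2, I2_mul, mul_I2,
      Z2_transpose, I2_transpose, Matrix.transpose_smul]
    try simp only [← add_smul]
    try congr 1
    try ring_nf
    try simp only [Real.sq_sqrt hg0, Real.sq_sqrt hg1, Real.sq_sqrt hη0, Real.sq_sqrt h1η,
          Real.sq_sqrt hμ1, Real.sq_sqrt hω1,
          Real.sq_sqrt (show (0:ℝ) ≤ -1 + g by linarith),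
          Real.sq_sqrt (show (0:ℝ) ≤ -1 + μ ^ 2 by nlinarith),
          Real.sq_sqrt (show (0:ℝ) ≤ -1 + ω ^ 2 by nlinarith)]
    try ring
end
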